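/- arXiv:2202.04546 — 10 statements merged into one kernel-verified Lean document; each statement's English description precedes it below -/
import Mathlib

section
/- The 'Decrease' acceleration rule is a conditional acceleration technique: let a be an update on states, let ξ and φ̌ be predicates on states, and assume that for every state x, ξ (a x) ∧ φ̌ x implies ξ x. Then for every n > 0 and every state x, if ξ (aⁿ⁻¹ x) holds and φ̌ (aⁱ x) holds for all i < n, then ξ (aⁱ x) holds for all i < n. -/
/-- The 'Decrease' acceleration rule is a conditional acceleration technique:
if `ξ (a x) ∧ φc x → ξ x` for all states `x`, then for all `n > 0` and all states `x`,
`ξ (a^[n-1] x)` together with `n`-invariance of `φc` at `x` implies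
`n`-invariance of `ξ` at `x`. -/
theorem decrease_is_conditional_acceleration_technique
    {V : Type*} [Fintype V]
    (a : (V → ℤ) → (V → ℤ)) (ξ φc : (V → ℤ) → Prop)
    (h : ∀ x : V → ℤ, ξ (a x) ∧ φc x → ξ x) :
    ∀ n : ℕ, 0 < n → ∀ x : V → ℤ,
      ξ (a^[n - 1] x) → (∀ i < n, φc (a^[i] x)) → ∀ i < n, ξ (a^[i] x) := by
  intro n hn x hlast hinv
  have key : ∀ k, k ≤ n - 1 → ξ (a^[n - 1 - k] x) := by
    intro k
    induction k with
    | zero => simpa using hlast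
    | succ k ih =>
      intro hk
      have hk' : k ≤ n - 1 := Nat.le_of_succ_le hk
      have h1 : n - 1 - k = (n - 1 - (k + 1)) + 1 := by omega
      apply h
      constructor
      · have := ih hk'
        rw [h1] at this
        rwa [Function.iterate_succ_apply'] at this
      · exact hinv _ (by omega)
  intro i hi
  have := key (n - 1 - i) (by omega)
  have : n - 1 - (n - 1 - i) = i := by omega
  simpa [this] using key (n - 1 - i) (by omega)
end

section
/- The 'Eventual Decrease' acceleration rule is a conditional acceleration technique: let a be an update on states, t : (V → ℤ) → ℤ, and φ̌ a predicate on states, and assume that for every state x, if t x ≥ t (a x) and φ̌ x, then t (a x) ≥ t (a² x). Then for every n > 0 and every state x, if t x > 0, t (aⁿ⁻¹ x) > 0, and φ̌ (aⁱ x) holds for all i < n, then t (aⁱ x) > 0 for all i < n. -/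
/-- The 'Eventual Decrease' acceleration rule is a conditional acceleration technique:
if `t x ≥ t (a x) ∧ φc x` implies `t (a x) ≥ t (a² x)` for all states `x`, then for all
`n > 0` and all states `x`, `t x > 0 ∧ t (a^[n-1] x) > 0` together with `n`-invariance
of `φc` at `x` implies `n`-invariance of `t > 0` at `x`. -/
theorem eventual_decrease_is_conditional_acceleration_technique
    {V : Type*} [Fintype V]
    (a : (V → ℤ) → (V → ℤ)) (t : (V → ℤ) → ℤ) (φc : (V → ℤ) → Prop)
    (h : ∀ x : V → ℤ, t x ≥ t (a x) → φc x → t (a x) ≥ t (a^[2] x)) :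
    ∀ n : ℕ, 0 < n → ∀ x : V → ℤ,
      t x > 0 → t (a^[n - 1] x) > 0 → (∀ i < n, φc (a^[i] x)) →
        ∀ i < n, t (a^[i] x) > 0 := by
  intro n hn x ht0 htn hφ i hi
  by_cases hmono : ∀ j < i, t (a^[j] x) ≤ t (a^[j + 1] x)
  · have key : ∀ m ≤ i, t x ≤ t (a^[m] x) := by
      intro m hm
      induction m with
      | zero => simp
      | succ m ih =>
        have h1 := ih (by omega)
        have h2 := hmono m (by omega)
        linarith
    have := key i le_rfl
    linarith
  · push_neg at hmono
    obtain ⟨j, hj, hdec⟩ := hmono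
    have decr : ∀ k, j ≤ k → k < n → t (a^[k + 1] x) ≤ t (a^[k] x) := by
      intro k hjk
      induction k with
      | zero =>
        intro _
        have : j = 0 := by omega
        subst this
        exact le_of_lt hdec
      | succ k ih =>
        intro hk
        rcases eq_or_lt_of_le hjk with heq | hlt
        · rw [← heq]; exact le_of_lt hdec
        · have hjk' : j ≤ k := by omega
          have h1 := ih hjk' (by omega)
          have h2 := h (a^[k] x)
            (by rw [show a (a^[k] x) = a^[k+1] x from (Function.iterate_succ_apply' a k x).symm]; exact h1)
            (hφ k (by omega))
          have e1 : a (a^[k] x) = a^[k + 1] x := (Function.iterate_succ_apply' a k x).symm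
          have e2 : a^[2] (a^[k] x) = a^[k + 1 + 1] x := by
            rw [← Function.iterate_add_apply]
            congr 1
            omega
          rw [e1, e2] at h2
          exact h2
    have chain : ∀ m, i ≤ m → m ≤ n - 1 → t (a^[m] x) ≤ t (a^[i] x) := by
      intro m him
      induction m with
      | zero =>
        intro _
        have : i = 0 := by omega
        simp [this]
      | succ m ih =>
        intro hm
        rcases eq_or_lt_of_le him with heq | hlt
        · rw [heq]
        · have h1 := decr m (by omega) (by omega)
          have h2 := ih (by omega) (by omega)
          linarith
    have := chain (n - 1) (by omega) le_rfl
    linarith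
end

section
/- The 'Eventual Increase' acceleration rule is a conditional acceleration technique: let a be an update on states, t : (V → ℤ) → ℤ, and φ̌ a predicate on states, and assume that for every state x, if t x ≤ t (a x) and φ̌ x, then t (a x) ≤ t (a² x). Then for every n > 0 and every state x, if t x > 0, t x ≤ t (a x), and φ̌ (aⁱ x) holds for all i < n, then t (aⁱ x) > 0 for all i < n. -/
/-- The 'Eventual Increase' acceleration rule is a conditional acceleration technique:
if `t x ≤ t (a x) ∧ φc x` implies `t (a x) ≤ t (a² x)` for all states `x`, then for all
`n > 0` and all states `x`, `t x > 0 ∧ t x ≤ t (a x)` together with `n`-invariance of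
`φc` at `x` implies `n`-invariance of `t > 0` at `x`. -/
theorem eventual_increase_is_conditional_acceleration_technique
    {V : Type*} [Fintype V]
    (a : (V → ℤ) → (V → ℤ)) (t : (V → ℤ) → ℤ) (φc : (V → ℤ) → Prop)
    (h : ∀ x : V → ℤ, t x ≤ t (a x) → φc x → t (a x) ≤ t (a^[2] x)) :
    ∀ n : ℕ, 0 < n → ∀ x : V → ℤ,
      t x > 0 → t x ≤ t (a x) → (∀ i < n, φc (a^[i] x)) →
        ∀ i < n, t (a^[i] x) > 0 := by
  intro n _ x hpos hmono hinv
  have step : ∀ i < n, t (a^[i] x) ≤ t (a^[i+1] x) := by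
    intro i
    induction i with
    | zero => intro _; simpa using hmono
    | succ k ih =>
      intro hk
      have hk' : k < n := Nat.lt_of_succ_lt hk
      have := h (a^[k] x) (by simpa [Function.iterate_succ_apply'] using ih hk') (hinv k hk')
      simpa [Function.iterate_succ_apply', Function.iterate_succ_apply] using this
  intro i hi
  have : t x ≤ t (a^[i] x) := by
    induction i with
    | zero => simp
    | succ k ih =>
      exact le_trans (ih (Nat.lt_of_succ_lt hi)) (step k (Nat.lt_of_succ_lt hi))
  omega
end

section
/- Soundness of the 'Fixpoint' acceleration rule: let a be an update on states, t : (V → ℤ) → ℤ, and let W ⊆ V be a set of variables such that (i) t depends only on the coordinates in W (i.e., t x = t y whenever x and y agree on W) and (ii) for every j ∈ W, the j-th coordinate of a depends only on the coordinates in W (i.e., (a x) j = (a y) j whenever x and y agree on W). If a state x satisfies (a x) j = x j for all j ∈ W, then t (aⁱ x) = t x for all i ∈ ℕ; in particular, if additionally t x > 0, then t (aⁱ x) > 0 for all i ∈ ℕ. -/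
/-- Soundness of the 'Fixpoint' acceleration rule: if `t` depends only on the
coordinates in `W`, the `W`-coordinates of the update `a` depend only on the
coordinates in `W`, and the state `x` is a fixpoint of `a` on `W`, then the value
of `t` is constant along the iterates of `a` from `x`; in particular, if moreover
`t x > 0`, then `t (a^[i] x) > 0` for all `i`. -/
theorem fixpoint_acceleration_sound
    {V : Type*} [Fintype V]
    (a : (V → ℤ) → (V → ℤ)) (t : (V → ℤ) → ℤ) (W : Set V)
    (ht : ∀ x y : V → ℤ, (∀ j ∈ W, x j = y j) → t x = t y)
    (ha : ∀ j ∈ W, ∀ x y : V → ℤ, (∀ j' ∈ W, x j' = y j') → a x j = a y j)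
    (x : V → ℤ) (hfp : ∀ j ∈ W, a x j = x j) :
    (∀ i : ℕ, t (a^[i] x) = t x) ∧ (t x > 0 → ∀ i : ℕ, t (a^[i] x) > 0) := by
  have key : ∀ i : ℕ, ∀ j ∈ W, a^[i] x j = x j := by
    intro i
    induction i with
    | zero => intro j _; rfl
    | succ n ih =>
      intro j hj
      rw [Function.iterate_succ_apply']
      calc a (a^[n] x) j = a x j := ha j hj _ _ ih
        _ = x j := hfp j hj
  refine ⟨fun i => ht _ _ (key i), fun hpos i => (ht _ _ (key i)) ▸ hpos⟩
end

section
/- Soundness of complete derivations of the acceleration calculus: let a be an update on states and let ξ₁, …, ξₘ and ψ₁, …, ψₘ be predicates on states such that for each j ∈ {1, …, m}, for all n > 0 and all states x: if ψⱼ x holds and ξₖ (aⁱ x) holds for all k < j and all i < n, then ξⱼ (aⁱ x) holds for all i < n. Then for all n > 0 and all states x: if ψⱼ x holds for all j ∈ {1, …, m}, then ξⱼ (aⁱ x) holds for all j ∈ {1, …, m} and all i < n. -/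
/-- Soundness of complete derivations of the acceleration calculus: if each `ψ j` is
a correct conditional acceleration result for the guard atom `ξ j` with premise the
conjunction of the earlier atoms `ξ k` (`k < j`), then the conjunction of all `ψ j`
is a correct acceleration condition for the full guard `⋀ j, ξ j`. -/
theorem acceleration_calculus_sound
    {V : Type*} [Fintype V] {m : ℕ}
    (a : (V → ℤ) → (V → ℤ)) (ξ ψ : Fin m → (V → ℤ) → Prop)
    (h : ∀ j : Fin m, ∀ n : ℕ, 0 < n → ∀ x : V → ℤ,
      ψ j x → (∀ k < j, ∀ i < n, ξ k (a^[i] x)) → ∀ i < n, ξ j (a^[i] x)) :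
    ∀ n : ℕ, 0 < n → ∀ x : V → ℤ,
      (∀ j : Fin m, ψ j x) → ∀ j : Fin m, ∀ i < n, ξ j (a^[i] x) := by
  intro n hn x hψ
  have key : ∀ v : ℕ, ∀ j : Fin m, (j : ℕ) = v → ∀ i < n, ξ j (a^[i] x) := by
    intro v
    induction v using Nat.strong_induction_on with
    | _ v ih =>
      intro j hj
      exact h j n hn x (hψ j) (fun k hk => ih k (hj ▸ hk) k rfl)
  exact fun j => key j j rfl
end

section
/- Unsat cores induce valid acceleration steps (semantic version of 'Unsat Core Induces ↝-Step'): let W be a type of valuations, let P and C be predicates on W (the fixed premise and the conclusion of the encoding of an acceleration technique for a guard atom ξ), let Φ be a set of predicates on W with ξ ∈ Φ, and let U be an unsatisfiable subset of the set {λ v, P v ∧ ¬ C v} ∪ (Φ \ {ξ}) of predicates (an unsat core of the negated encoding). Let D := U ∩ (Φ \ {ξ}). If a predicate φ̌ on W satisfies that φ̌ v implies p v for every p ∈ D and every v, then for every v, P v ∧ φ̌ v implies C v. -/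
/-- Unsat cores induce valid acceleration steps: if `U` is an unsatisfiable subset of
`{P ∧ ¬C} ∪ (Φ \ {ξ})` (an unsat core of the negated encoding) and the already handled
part `φc` of the guard implies every predicate in `D = U ∩ (Φ \ {ξ})`, then the
implication `P ∧ φc → C` is valid. -/
theorem unsat_core_induces_step
    {W : Type*} (P C : W → Prop) (Φ : Set (W → Prop)) (ξ : W → Prop)
    (hξ : ξ ∈ Φ)
    (U : Set (W → Prop))
    (hU : U ⊆ insert (fun v => P v ∧ ¬ C v) (Φ \ {ξ}))
    (hunsat : ¬ ∃ v : W, ∀ p ∈ U, p v)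
    (φc : W → Prop)
    (himp : ∀ p ∈ U ∩ (Φ \ {ξ}), ∀ v : W, φc v → p v) :
    ∀ v : W, P v ∧ φc v → C v := by
  intro v ⟨hP, hφ⟩
  by_contra hC
  exact hunsat ⟨v, fun p hp => by
    rcases hU hp with h | h
    · subst h; exact ⟨hP, hC⟩
    · exact himp p ⟨hp, h⟩ v hφ⟩
end

section
/- Proving non-termination via complete ↝ₙₜ-derivations: let a be an update on states and let ξ₁, …, ξₘ and ψ₁, …, ψₘ be predicates on states such that for each j ∈ {1, …, m} and every state x: if ψⱼ x holds and ξₖ (aⁱ x) holds for all k < j and all i ∈ ℕ, then ξⱼ (aⁱ x) holds for all i ∈ ℕ. Then every state c satisfying ψ₁ ∧ … ∧ ψₘ satisfies ξⱼ (aⁱ c) for all j and all i ∈ ℕ; in particular, the loop with guard φ = ξ₁ ∧ … ∧ ξₘ and update a admits an infinite run from c, i.e., φ (aⁱ c) holds for every i ∈ ℕ. -/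
/-- Proving non-termination via complete ↝ₙₜ-derivations: if each `ψ j` is a correct
conditional non-termination result for the guard atom `ξ j` with premise the
conjunction of the earlier atoms, then every state `c` satisfying all `ψ j` satisfies
all guard atoms along all iterates of `a`; in particular the loop with guard
`⋀ j, ξ j` and update `a` admits an infinite run from `c`. -/
theorem nontermination_via_nt_derivations
    {V : Type*} [Fintype V] {m : ℕ}
    (a : (V → ℤ) → (V → ℤ)) (ξ ψ : Fin m → (V → ℤ) → Prop)
    (h : ∀ j : Fin m, ∀ x : V → ℤ,
      ψ j x → (∀ k < j, ∀ i : ℕ, ξ k (a^[i] x)) → ∀ i : ℕ, ξ j (a^[i] x)) :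
    ∀ c : V → ℤ, (∀ j : Fin m, ψ j c) →
      (∀ j : Fin m, ∀ i : ℕ, ξ j (a^[i] c)) ∧
      (∀ i : ℕ, ∀ j : Fin m, ξ j (a^[i] c)) := by
  intro c hc
  have key : ∀ j : Fin m, ∀ i : ℕ, ξ j (a^[i] c) := by
    have : ∀ n : ℕ, ∀ j : Fin m, j.val < n → ∀ i : ℕ, ξ j (a^[i] c) := by
      intro n
      induction n with
      | zero => intro j hj; omega
      | succ n ih =>
        intro j hj
        exact h j c (hc j) (fun k hk => ih k (by omega))
    exact fun j => this (j.val + 1) j (by omega)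
  exact ⟨key, fun i j => key j i⟩
end

section
/- The 'Eventual Increase' rule is a conditional non-termination technique: let a be an update on states, t : (V → ℤ) → ℤ, and φ̌ a predicate on states, and assume that for every state x, if t x ≤ t (a x) and φ̌ x, then t (a x) ≤ t (a² x). Then for every state x, if t x > 0, t x ≤ t (a x), and φ̌ (aⁱ x) holds for all i ∈ ℕ, then t (aⁱ x) > 0 for all i ∈ ℕ. -/
/-- The 'Eventual Increase' rule is a conditional non-termination technique: if
`t x ≤ t (a x) ∧ φc x` implies `t (a x) ≤ t (a^[2] x)` for all states `x`, then for every
state `x` with `t x > 0` and `t x ≤ t (a x)`, if `φc (a^[i] x)` holds for all `i ∈ ℕ`,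
then `t (a^[i] x) > 0` for all `i ∈ ℕ`. -/
theorem eventual_increase_is_conditional_nontermination_technique
    {V : Type*} [Fintype V]
    (a : (V → ℤ) → (V → ℤ)) (t : (V → ℤ) → ℤ) (φc : (V → ℤ) → Prop)
    (h : ∀ x : V → ℤ, t x ≤ t (a x) → φc x → t (a x) ≤ t (a^[2] x)) :
    ∀ x : V → ℤ, t x > 0 → t x ≤ t (a x) → (∀ i : ℕ, φc (a^[i] x)) →
      ∀ i : ℕ, t (a^[i] x) > 0 := by
  intro x hx hmono hφ
  have key : ∀ i : ℕ, t (a^[i] x) > 0 ∧ t (a^[i] x) ≤ t (a^[i+1] x) := by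
    intro i
    induction i with
    | zero => exact ⟨hx, hmono⟩
    | succ n ih =>
      simp only [Function.iterate_succ_apply', Function.iterate_zero_apply,
        Function.iterate_one] at ih ⊢
      have h2 := h (a^[n] x) ih.2 (hφ n)
      simp only [show (2:ℕ) = 1 + 1 from rfl, Function.iterate_add_apply,
        Function.iterate_one] at h2
      exact ⟨lt_of_lt_of_le ih.1 ih.2, h2⟩
  exact fun i => (key i).1
end

section
/- Eventual-decrease sequence lemma: let g : ℕ → ℤ and n ∈ ℕ, and suppose that for every k with k + 2 ≤ n, if g k ≥ g (k+1) then g (k+1) ≥ g (k+2). Then for every i ≤ n, g i ≥ min (g 0) (g n). In particular, if g 0 > 0 and g n > 0, then g i > 0 for all i ≤ n. -/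
/-- Eventual-decrease sequence lemma: a sequence that can never increase again once it
has started to decrease (up to index `n`) stays above the minimum of its first and last
value; in particular, if the first and last values are positive, all values up to `n`
are positive. -/
theorem eventual_decrease_sequence
    (g : ℕ → ℤ) (n : ℕ)
    (h : ∀ k : ℕ, k + 2 ≤ n → g k ≥ g (k + 1) → g (k + 1) ≥ g (k + 2)) :
    (∀ i ≤ n, g i ≥ min (g 0) (g n)) ∧
      (g 0 > 0 → g n > 0 → ∀ i ≤ n, g i > 0) := by
  have main : ∀ i ≤ n, g i ≥ min (g 0) (g n) := by
    intro i hi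
    by_cases hc : ∃ j, j < i ∧ g j ≥ g (j + 1)
    · -- there is a decrease before i; then g is antitone from j onwards up to n
      obtain ⟨j, hj, hdec⟩ := hc
      have step : ∀ m, j ≤ m → m + 1 ≤ n → g m ≥ g (m + 1) := by
        intro m hm
        induction m, hm using Nat.le_induction with
        | base => intro _; exact hdec
        | succ m hm ih =>
          intro hmn
          exact h m hmn (ih (by omega))
      have chain : ∀ m, i ≤ m → m ≤ n → g i ≥ g m := by
        intro m hm
        induction m, hm using Nat.le_induction with
        | base => intro _; exact le_refl _
        | succ m hm ih =>
          intro hmn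
          have := step m (by omega) (by omega)
          have := ih (by omega)
          omega
      have := chain n hi le_rfl
      exact le_trans (min_le_right _ _) this
    · push_neg at hc
      have chain : ∀ m ≤ i, g 0 ≤ g m := by
        intro m hm
        induction m with
        | zero => exact le_refl _
        | succ m ih =>
          have h1 := hc m (by omega)
          have h2 := ih (by omega)
          omega
      exact le_trans (min_le_left _ _) (chain i le_rfl)
  refine ⟨main, fun h0 hn i hi => ?_⟩
  have := main i hi
  have := lt_min h0 hn
  omega
end

section
/- Soundness of the Nonterm processor for lower bounds (semantic version of Theorem 'Soundness of Non-Termination Processor'): let L be a type of locations, let configurations be pairs (f, c) of a location f ∈ L and a state c : V → ℤ, and let T be a set of transitions, each given by a source location, a target location, a guard (a predicate on states), an update (a map on states), and a cost (a function from states to ℤ); a configuration (f, c) evaluates in one step with cost k to (g, c') if some transition of T has source f, target g, its guard holds at c, c' is the update applied to c, and k is its cost at c. Suppose T contains a self-loop transition at location f with guard φ, update a, and cost p such that p x > 0 for every state x with φ x, and let ψ be a predicate on states such that every state c with ψ c satisfies φ (aᵏ c) for all k ∈ ℕ. If a configuration (f', c') evaluates in finitely many steps (via T) to some configuration (f, c)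 with ψ c, then the derivation height of (f', c') in T — the supremum, in ℤ extended with ⊤, of the total costs of finite evaluation sequences starting at (f', c') — equals ⊤. -/
/-- A transition of an integer transition system over locations `L` and program
variables `V`: a source location, a target location, a guard, an update and a cost. -/
structure LoopTransition (L : Type*) (V : Type*) where
  src : L
  tgt : L
  guard : (V → ℤ) → Prop
  update : (V → ℤ) → (V → ℤ)
  cost : (V → ℤ) → ℤ

/-- One evaluation step: configuration `(f, c)` evaluates with cost `k` to `(g, c')`
via some transition of `T`. -/
def LoopTransition.Step {L V : Type*} (T : Set (LoopTransition L V))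
    (cfg : L × (V → ℤ)) (k : ℤ) (cfg' : L × (V → ℤ)) : Prop :=
  ∃ τ ∈ T, τ.src = cfg.1 ∧ τ.tgt = cfg'.1 ∧ τ.guard cfg.2 ∧
    cfg'.2 = τ.update cfg.2 ∧ k = τ.cost cfg.2

/-- Finitely many evaluation steps with total cost `k` (the sum of the step costs). -/
inductive LoopTransition.Steps {L V : Type*} (T : Set (LoopTransition L V)) :
    L × (V → ℤ) → ℤ → L × (V → ℤ) → Prop
  | refl (cfg : L × (V → ℤ)) : LoopTransition.Steps T cfg 0 cfg
  | step {cfg₁ : L × (V → ℤ)} {k : ℤ} {cfg₂ : L × (V → ℤ)} {k' : ℤ}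
      {cfg₃ : L × (V → ℤ)} :
      LoopTransition.Step T cfg₁ k cfg₂ → LoopTransition.Steps T cfg₂ k' cfg₃ →
      LoopTransition.Steps T cfg₁ (k + k') cfg₃

/-- The derivation height of a configuration: the supremum, in `ℤ` extended with `⊤`,
of the total costs of finite evaluation sequences starting at the configuration. -/
noncomputable def LoopTransition.dh {L V : Type*} (T : Set (LoopTransition L V))
    (cfg : L × (V → ℤ)) : WithTop ℤ :=
  sSup {x : WithTop ℤ | ∃ (k : ℤ) (cfg' : L × (V → ℤ)),
    LoopTransition.Steps T cfg k cfg' ∧ x = (k : WithTop ℤ)}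

theorem LoopTransition.Steps.trans {L V : Type*} {T : Set (LoopTransition L V)}
    {cfg₁ cfg₂ cfg₃ : L × (V → ℤ)} {k k' : ℤ}
    (h : LoopTransition.Steps T cfg₁ k cfg₂)
    (h' : LoopTransition.Steps T cfg₂ k' cfg₃) :
    LoopTransition.Steps T cfg₁ (k + k') cfg₃ := by
  induction h with
  | refl cfg => simpa using h'
  | step hs _ ih => rename_i k1 _ k2 _; rw [add_assoc]; exact .step hs (ih h')

/-- Soundness of the Nonterm processor for lower bounds: if `T` contains a positive-cost
self-loop at `f` with guard `φ` and update `a`, `ψ` is a set of witnesses of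
non-termination of this loop, and a configuration `(f', c')` reaches some `(f, c)`
with `ψ c`, then the derivation height of `(f', c')` is `⊤`. -/
theorem nonterm_processor_sound_for_lower_bounds
    {L : Type*} {V : Type*} [Fintype V]
    (T : Set (LoopTransition L V))
    (f : L) (φ : (V → ℤ) → Prop) (a : (V → ℤ) → (V → ℤ)) (p : (V → ℤ) → ℤ)
    (hloop : (⟨f, f, φ, a, p⟩ : LoopTransition L V) ∈ T)
    (hp : ∀ x : V → ℤ, φ x → p x > 0)
    (ψ : (V → ℤ) → Prop)
    (hψ : ∀ c : V → ℤ, ψ c → ∀ k : ℕ, φ (a^[k] c))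
    (f' : L) (c' : V → ℤ) (k₀ : ℤ) (c : V → ℤ)
    (hreach : LoopTransition.Steps T (f', c') k₀ (f, c)) (hc : ψ c) :
    LoopTransition.dh T (f', c') = ⊤ := by
  have key : ∀ (n : ℕ) (c : V → ℤ), (∀ k : ℕ, φ (a^[k] c)) →
      ∃ k : ℤ, (n : ℤ) ≤ k ∧ LoopTransition.Steps T (f, c) k (f, a^[n] c) := by
    intro n
    induction n with
    | zero => intro c _; exact ⟨0, le_refl 0, .refl _⟩
    | succ n ih =>
      intro c hφ
      obtain ⟨k, hk, hsteps⟩ := ih (a c) (fun k => by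
        have := hφ (k + 1); rwa [Function.iterate_succ_apply] at this)
      refine ⟨p c + k, ?_, ?_⟩
      · have : (1 : ℤ) ≤ p c := hp c (by simpa using hφ 0)
        push_cast; omega
      · rw [Function.iterate_succ_apply]
        exact .step ⟨⟨f, f, φ, a, p⟩, hloop, rfl, rfl, by simpa using hφ 0, rfl, rfl⟩ hsteps
  by_contra hne
  obtain ⟨m, hm⟩ := WithTop.ne_top_iff_exists.mp hne
  have hub := (WithTop.isLUB_sSup' (s := {x : WithTop ℤ | ∃ (k : ℤ) (cfg' : L × (V → ℤ)),
    LoopTransition.Steps T (f', c') k cfg' ∧ x = (k : WithTop ℤ)})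
    ⟨(0 : ℤ), 0, _, .refl _, rfl⟩).1
  obtain ⟨n, hn⟩ : ∃ n : ℕ, m - k₀ < (n : ℤ) := exists_nat_gt _
  obtain ⟨k, hk, hsteps⟩ := key n c (hψ c hc)
  have hmem : ((k₀ + k : ℤ) : WithTop ℤ) ∈ {x : WithTop ℤ | ∃ (k : ℤ) (cfg' : L × (V → ℤ)),
      LoopTransition.Steps T (f', c') k cfg' ∧ x = (k : WithTop ℤ)} :=
    ⟨k₀ + k, _, hreach.trans hsteps, rfl⟩
  have := hub hmem
  rw [LoopTransition.dh] at hm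
  rw [← hm, WithTop.coe_le_coe] at this
  omega
end
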